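/- If P is a graded classical S-primary submodule of M and I is a graded submodule of M with (I :_R M) ∩ S ≠ ∅ and (P ∩ I :_R M) ∩ S = ∅, then P ∩ I is a graded classical S-primary submodule of M. -/

import Mathlib

variable {G : Type*} [AddCommGroup G] [DecidableEq G]
variable {R : Type*} [CommRing R] (𝒜 : G → AddSubmonoid R) [GradedRing 𝒜]
variable {M : Type*} [AddCommGroup M] [Module R M]
variable (ℳ : G → AddSubmonoid M) [SetLike.GradedSMul 𝒜 ℳ] [DirectSum.Decomposition ℳ]

/-- `P` is a graded submodule of the graded module `M`. -/
def IsGradedSubmodule (P : Submodule R M) : Prop :=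
  ∀ m ∈ P, ∀ g : G, (DirectSum.decompose ℳ m g : M) ∈ P

/-- `P` is a graded classical primary submodule of `M`. -/
def IsGrClPrimary (P : Submodule R M) : Prop :=
  IsGradedSubmodule ℳ P ∧ P ≠ ⊤ ∧
    ∀ x y : R, ∀ m : M, SetLike.IsHomogeneousElem 𝒜 x → SetLike.IsHomogeneousElem 𝒜 y →
      SetLike.IsHomogeneousElem ℳ m → (x * y) • m ∈ P →
        x • m ∈ P ∨ ∃ n : ℕ, 0 < n ∧ y ^ n • m ∈ P

/-- `P` is a graded classical `S`-primary submodule of `M`;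
this includes the requirement `(P :_R M) ∩ S = ∅`. -/
def IsGrClSPrimary (S : Submonoid R) (P : Submodule R M) : Prop :=
  IsGradedSubmodule ℳ P ∧ Disjoint ((P.colon ⊤ : Ideal R) : Set R) (S : Set R) ∧
    ∃ s ∈ S, ∀ x y : R, ∀ m : M, SetLike.IsHomogeneousElem 𝒜 x → SetLike.IsHomogeneousElem 𝒜 y →
      SetLike.IsHomogeneousElem ℳ m → (x * y) • m ∈ P →
        (s * x) • m ∈ P ∨ ∃ n : ℕ, 0 < n ∧ (s * y ^ n) • m ∈ P

theorem IsGradedSubmodule.inf {P I : Submodule R M} (hP : IsGradedSubmodule ℳ P)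
    (hI : IsGradedSubmodule ℳ I) : IsGradedSubmodule ℳ (P ⊓ I) :=
  fun m hm g => ⟨hP m hm.1 g, hI m hm.2 g⟩

-- With `t ∈ (I :_R M) ∩ S`, this turns the `S`-primary witness `s` of `P` into the witness
-- `t * s` of `P ⊓ I`.
theorem mul_smul_mem_inf_of_mem_colon {P I : Submodule R M} {t a : R} {m : M}
    (ht : t ∈ I.colon ⊤) (ham : a • m ∈ P) : (t * a) • m ∈ P ⊓ I := by
  rw [mul_smul]
  exact ⟨P.smul_mem t ham, Submodule.mem_colon.mp ht _ trivial⟩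

theorem inf_isGrClSPrimary (S : Submonoid R)
    (P I : Submodule R M)
    (hgrI : IsGradedSubmodule ℳ I)
    (hP : IsGrClSPrimary 𝒜 ℳ S P)
    (hI : (((I.colon ⊤ : Ideal R) : Set R) ∩ (S : Set R)).Nonempty)
    (hdisj : Disjoint (((P ⊓ I).colon ⊤ : Ideal R) : Set R) (S : Set R)) :
    IsGrClSPrimary 𝒜 ℳ S (P ⊓ I) := by
  obtain ⟨hgrP, -, s, hsS, hprim⟩ := hP
  obtain ⟨t, htI, htS⟩ := hI
  refine ⟨hgrP.inf ℳ hgrI, hdisj, t * s, S.mul_mem htS hsS, ?_⟩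
  intro x y m hx hy hm hxym
  rcases hprim x y m hx hy hm hxym.1 with hxm | ⟨n, hn, hym⟩
  · left
    simpa only [mul_assoc] using mul_smul_mem_inf_of_mem_colon htI hxm
  · right
    exact ⟨n, hn, by simpa only [mul_assoc] using mul_smul_mem_inf_of_mem_colon htI hym⟩
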